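/- arXiv:2406.05909 — 7 statements merged into one kernel-verified Lean document; each statement's English description precedes it below -/
import Mathlib

section
/- If Γ is a complete multipartite graph and G is a tube of Γ, then the contracted graph Γ/G, obtained by collapsing G to a single vertex (with the new vertex adjacent to v exactly when G ∪ {v} induces a connected subgraph), is a complete multipartite graph. -/
/-- A simple graph is complete multipartite if there is an equivalence relation
(whose classes are the blocks) such that two vertices are adjacent iff they are
not equivalent. -/
def IsCompleteMultipartite {V : Type*} (G : SimpleGraph V) : Prop :=
  ∃ r : Setoid V, ∀ v w : V, G.Adj v w ↔ ¬ r v w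

/-- The contraction `Γ/S` of a graph `Γ` by a set of vertices `S`: the vertices are
the vertices outside of `S` together with one new vertex `none` (the collapsed set);
the new vertex is adjacent to `v` exactly when some vertex of `S` is adjacent to `v`
in `Γ`, and the other adjacencies are inherited. -/
def SimpleGraph.contractSet {V : Type*} (Γ : SimpleGraph V) (S : Set V) :
    SimpleGraph (Option {v : V // v ∉ S}) :=
  SimpleGraph.fromRel fun x y =>
    match x, y with
    | some a, some b => Γ.Adj a.1 b.1
    | some a, none => ∃ g ∈ S, Γ.Adj a.1 g
    | none, _ => False

theorem stmt1 {V : Type} [Fintype V] (Γ : SimpleGraph V)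
    (hΓ : IsCompleteMultipartite Γ) (S : Set V)
    (hS : S.Nonempty) (hconn : (Γ.induce S).Connected) :
    IsCompleteMultipartite (Γ.contractSet S) := by
  obtain ⟨r, hr⟩ := hΓ
  obtain ⟨g₀, hg₀⟩ := hS
  by_cases hcase : ∀ g ∈ S, r g₀ g
  · -- S lies inside a single block
    refine ⟨⟨fun x y => match x, y with
      | some a, some b => r a.1 b.1
      | some a, none => r a.1 g₀
      | none, some b => r g₀ b.1
      | none, none => True, ?_, ?_, ?_⟩, ?_⟩
    · rintro (_ | a)
      · trivial
      · exact r.refl _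
    · rintro (_ | a) (_ | b) h
      · trivial
      · exact r.symm h
      · exact r.symm h
      · exact r.symm h
    · rintro (_ | a) (_ | b) (_ | c) h₁ h₂
      · trivial
      · exact h₂
      · trivial
      · exact r.trans h₁ h₂
      · exact h₁
      · exact r.trans h₁ h₂
      · exact r.trans h₁ h₂
      · exact r.trans h₁ h₂
    · rintro (_ | a) (_ | b)
      · simp [SimpleGraph.contractSet, SimpleGraph.fromRel_adj]
      · constructor
        · rintro ⟨hne, hrel⟩ hab
          simp only [SimpleGraph.contractSet, SimpleGraph.fromRel] at *
          rcases hrel with h | ⟨g, hgS, hadj⟩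
          · exact h
          · exact (hr _ _).mp hadj (r.trans (r.symm hab) (hcase g hgS))
        · intro hab
          refine ⟨by simp, Or.inr ⟨g₀, hg₀, ?_⟩⟩
          exact (hr _ _).mpr fun h => hab (r.symm h)
      · constructor
        · rintro ⟨hne, hrel⟩ hab
          rcases hrel with ⟨g, hgS, hadj⟩ | h
          · exact (hr _ _).mp hadj (r.trans (r.symm (r.symm hab)) (hcase g hgS))
          · exact h
        · intro hab
          refine ⟨by simp, Or.inl ⟨g₀, hg₀, ?_⟩⟩
          exact (hr _ _).mpr fun h => hab h
      · constructor
        · rintro ⟨hne, hrel⟩ h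
          rcases hrel with hadj | hadj
          · exact (hr _ _).mp hadj h
          · exact (hr _ _).mp hadj (r.symm h)
        · intro h
          have hadj : Γ.Adj a.1 b.1 := (hr _ _).mpr h
          exact ⟨fun he => hadj.ne (by injection he with h'; exact congrArg Subtype.val h'),
            Or.inl hadj⟩
  · -- S meets at least two blocks: the collapsed vertex is its own block
    push_neg at hcase
    obtain ⟨g₁, hg₁S, hg₁⟩ := hcase
    refine ⟨⟨fun x y => match x, y with
      | some a, some b => r a.1 b.1
      | none, none => True
      | _, _ => False, ?_, ?_, ?_⟩, ?_⟩
    · rintro (_ | a)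
      · trivial
      · exact r.refl _
    · rintro (_ | a) (_ | b) h
      · trivial
      · exact h
      · exact h
      · exact r.symm h
    · rintro (_ | a) (_ | b) (_ | c) h₁ h₂
      · trivial
      · exact h₂.elim
      · exact h₁.elim
      · exact h₁.elim
      · exact h₁.elim
      · exact h₁.elim
      · exact h₂.elim
      · exact r.trans h₁ h₂
    · have key : ∀ a : {v : V // v ∉ S}, ∃ g ∈ S, Γ.Adj a.1 g := by
        intro a
        by_cases hag : r a.1 g₀
        · refine ⟨g₁, hg₁S, (hr _ _).mpr fun h => ?_⟩
          exact hg₁ (r.trans (r.symm hag) h)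
        · exact ⟨g₀, hg₀, (hr _ _).mpr hag⟩
      rintro (_ | a) (_ | b)
      · simp [SimpleGraph.contractSet, SimpleGraph.fromRel_adj]
      · exact ⟨fun _ h => h, fun _ => ⟨by simp, Or.inr (key b)⟩⟩
      · exact ⟨fun _ h => h, fun _ => ⟨by simp, Or.inl (key a)⟩⟩
      · constructor
        · rintro ⟨hne, hrel⟩ h
          rcases hrel with hadj | hadj
          · exact (hr _ _).mp hadj h
          · exact (hr _ _).mp hadj (r.symm h)
        · intro h
          have hadj : Γ.Adj a.1 b.1 := (hr _ _).mpr h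
          exact ⟨fun he => hadj.ne (by injection he with h'; exact congrArg Subtype.val h'),
            Or.inl hadj⟩
end

section
/- A simple graph Γ is complete multipartite if and only if for every nontrivial tube G of Γ (a tube with at least two vertices), the vertex obtained by contracting G in Γ/G is adjacent to every other vertex of Γ/G. -/
lemma exists_edge_of_connected_nontrivial {V : Type} (Γ : SimpleGraph V) (S : Set V)
    (hc : (Γ.induce S).Connected) (hnt : S.Nontrivial) :
    ∃ x ∈ S, ∃ y ∈ S, Γ.Adj x y := by
  obtain ⟨x, hx, y, hy, hxy⟩ := hnt
  obtain ⟨w⟩ := hc.preconnected ⟨x, hx⟩ ⟨y, hy⟩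
  cases w with
  | nil => exact (hxy rfl).elim
  | @cons _ c _ h p => exact ⟨x, hx, c.1, c.2, h⟩

/-- A graph is complete multipartite iff for every nontrivial tube `S`
(a subset with at least two vertices inducing a connected subgraph), the vertex
obtained by contracting `S` is adjacent in `Γ/S` to every other vertex. -/
theorem stmt2 {V : Type} [Fintype V] (Γ : SimpleGraph V) :
    IsCompleteMultipartite Γ ↔
      ∀ S : Set V, S.Nonempty → (Γ.induce S).Connected → S.Nontrivial →
        ∀ b : {v : V // v ∉ S}, (Γ.contractSet S).Adj none (some b) := by
  constructor
  · rintro ⟨r, hr⟩ S _ hc hnt b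
    have hex : ∃ g ∈ S, Γ.Adj b.1 g := by
      by_contra hcon
      push_neg at hcon
      have hall : ∀ g ∈ S, r b.1 g := fun g hg => by
        by_contra hr'
        exact hcon g hg ((hr b.1 g).mpr hr')
      obtain ⟨x, hx, y, hy, hxy⟩ := exists_edge_of_connected_nontrivial Γ S hc hnt
      exact (hr x y).mp hxy (r.trans (r.symm (hall x hx)) (hall y hy))
    rw [SimpleGraph.contractSet, SimpleGraph.fromRel_adj]
    exact ⟨by simp, Or.inr hex⟩
  · intro H
    refine ⟨⟨fun v w => ¬ Γ.Adj v w, ⟨fun v => Γ.irrefl, fun h a => h a.symm, ?_⟩⟩,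
      fun v w => by simp [Setoid.r]⟩
    intro v w u h1 h2 h
    by_cases hvw : v = w
    · exact h2 (hvw ▸ h)
    by_cases hwu : w = u
    · exact h1 (hwu ▸ h)
    have hne := h.ne
    have hconn : (Γ.induce ({v, u} : Set V)).Connected := by
      rw [SimpleGraph.connected_iff]
      refine ⟨?_, ⟨⟨v, by simp⟩⟩⟩
      rintro ⟨a, ha⟩ ⟨b, hb⟩
      simp only [Set.mem_insert_iff, Set.mem_singleton_iff] at ha hb
      rcases ha with rfl | rfl <;> rcases hb with rfl | rfl
      · rfl
      · exact (show (Γ.induce ({a, b} : Set V)).Adj ⟨a, by simp⟩ ⟨b, by simp⟩ from h).reachable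
      · exact ((show (Γ.induce ({b, a} : Set V)).Adj ⟨b, by simp⟩ ⟨a, by simp⟩ from h).reachable).symm
      · rfl
    have hw : w ∉ ({v, u} : Set V) := by
      simp only [Set.mem_insert_iff, Set.mem_singleton_iff]
      push_neg
      exact ⟨fun e => hvw e.symm, hwu⟩
    have := H {v, u} ⟨v, by simp⟩ hconn ⟨v, by simp, u, by simp, hne⟩ ⟨w, hw⟩
    rw [SimpleGraph.contractSet, SimpleGraph.fromRel_adj] at this
    obtain ⟨-, hor⟩ := this
    rcases hor with h' | h'
    · exact h'
    · obtain ⟨g, hg, hadj⟩ := h'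
      rcases hg with rfl | rfl
      · exact h1 hadj.symm
      · exact h2 hadj
end

section
/- For any two graphs Γ₁, Γ₂ and any positive integers x, y, the chromatic polynomial satisfies the multiplicative identity χ_Γ(xy) = Σ_{I ⊢ Γ} χ_{Γ/I}(x) · Π_{G ∈ I} χ_{Γ|_G}(y), where the sum is over all partitions I of the vertex set of Γ into tubes, Γ/I is the graph obtained by contracting each block, and Γ|_G is the induced subgraph on block G. -/
open scoped Classical

noncomputable def properColorings {W : Type*} (Γ : SimpleGraph W) (q : ℕ) : ℕ :=
  Nat.card {f : W → Fin q // ∀ v w : W, Γ.Adj v w → f v ≠ f w}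

def IsGraphPartition {V : Type*} (Γ : SimpleGraph V) (r : Setoid V) : Prop :=
  ∀ v : V, (Γ.induce {w | r w v}).Connected

def contractSetoid {V : Type*} (Γ : SimpleGraph V) (r : Setoid V) :
    SimpleGraph (Quotient r) :=
  SimpleGraph.fromRel fun a b =>
    ∃ v w : V, Quotient.mk r v = a ∧ Quotient.mk r w = b ∧ Γ.Adj v w

noncomputable instance setoidFintype (V : Type*) [Fintype V] : Fintype (Setoid V) :=
  Fintype.ofSurjective (fun f : V → V => Setoid.ker f) (fun r => by
    refine ⟨fun v => (Quotient.mk r v).out, Setoid.ext fun a b => ?_⟩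
    show (Quotient.mk r a).out = (Quotient.mk r b).out ↔ r a b
    constructor
    · intro h
      have h2 := congrArg (Quotient.mk r) h
      rw [Quotient.out_eq, Quotient.out_eq] at h2
      exact Quotient.eq.mp h2
    · intro h
      have h2 : Quotient.mk r a = Quotient.mk r b := Quotient.sound h
      rw [h2])

noncomputable instance quotFintype {V : Type*} [Finite V] (r : Setoid V) :
    Fintype (Quotient r) :=
  Fintype.ofFinite _

/-!
Identify `Fin (x * y)` with `Fin x × Fin y`. A proper coloring `c` with pairs of colors determines
the partition of `V` into the connected components of the graph of those edges of `Γ` whose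
endpoints share the first color; its blocks are tubes. The first color is constant on blocks and
differs across every edge between distinct blocks, so it is a proper `x`-coloring of the contracted
graph, while on each block the second color alone must be proper. Conversely, such data glue back
to a proper coloring inducing the same partition, so counting colorings partition by partition
gives the identity.
-/

open SimpleGraph

theorem properColorings_eq_card_coloring {W : Type*} (Γ : SimpleGraph W) (q : ℕ) :
    properColorings Γ q = Nat.card (Γ.Coloring (Fin q)) :=
  Nat.card_congr
    { toFun := fun f => Coloring.mk f.1 (f.2 _ _)
      invFun := fun c => ⟨c, fun _ _ => c.valid⟩
      left_inv := fun _ => rfl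
      right_inv := fun _ => rfl }

theorem isGraphPartition_reachableSetoid {V : Type*} {Γ H : SimpleGraph V} (hH : H ≤ Γ) :
    IsGraphPartition Γ H.reachableSetoid := by
  intro v
  have hblock : {w | H.reachableSetoid w v} = (H.connectedComponentMk v).supp := by
    ext w
    exact ConnectedComponent.eq.symm
  rw [hblock]
  exact (H.connectedComponentMk v).connected_toSimpleGraph.mono fun _ _ h => hH h

theorem contractSetoid_adj_iff {V : Type*} {Γ : SimpleGraph V} {r : Setoid V}
    {a b : Quotient r} :
    (contractSetoid Γ r).Adj a b ↔
      a ≠ b ∧ ∃ v w, Quotient.mk r v = a ∧ Quotient.mk r w = b ∧ Γ.Adj v w := by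
  rw [contractSetoid, fromRel_adj]
  refine and_congr_right fun _ => ⟨?_, Or.inl⟩
  rintro (h | ⟨v, w, hv, hw, hadj⟩)
  · exact h
  · exact ⟨w, v, hw, hv, hadj.symm⟩

namespace SimpleGraph

section SameValue

variable {V γ : Type*} {Γ : SimpleGraph V} {f : V → γ}

def sameValueGraph (Γ : SimpleGraph V) (f : V → γ) : SimpleGraph V where
  Adj v w := Γ.Adj v w ∧ f v = f w
  symm := ⟨fun _ _ h => ⟨h.1.symm, h.2.symm⟩⟩
  loopless := ⟨fun _ h => h.1.ne rfl⟩

theorem sameValueGraph_le : Γ.sameValueGraph f ≤ Γ := fun _ _ h => h.1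

theorem Reachable.apply_eq_of_sameValueGraph {v w : V}
    (h : (Γ.sameValueGraph f).Reachable v w) : f v = f w := by
  obtain ⟨p⟩ := h
  induction p with
  | nil => rfl
  | cons h _ ih => exact h.2.trans ih

theorem reachableSetoid_sameValueGraph_eq_iff {r : Setoid V} (hr : IsGraphPartition Γ r) :
    (Γ.sameValueGraph f).reachableSetoid = r ↔
      (∀ v w, r v w → f v = f w) ∧ ∀ v w, Γ.Adj v w → f v = f w → r v w := by
  constructor
  · rintro rfl
    exact ⟨fun _ _ h => h.apply_eq_of_sameValueGraph,
      fun _ _ hadj heq => Adj.reachable (G := Γ.sameValueGraph f) ⟨hadj, heq⟩⟩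
  · rintro ⟨hconst, hsplit⟩
    ext v w
    constructor
    · rintro ⟨p⟩
      induction p with
      | nil => exact r.refl _
      | cons h _ ih => exact r.trans (hsplit _ _ h.1 h.2) ih
    · intro hvw
      let φ : Γ.induce {u | r u w} →g Γ.sameValueGraph f :=
        ⟨Subtype.val, fun {a b} hab => ⟨hab, (hconst _ _ a.2).trans (hconst _ _ b.2).symm⟩⟩
      exact ((hr w).preconnected ⟨v, hvw⟩ ⟨w, r.refl w⟩).map φ

end SameValue

namespace Coloring

variable {V α β : Type*} {Γ : SimpleGraph V} {r : Setoid V}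

def fstPartition (c : Γ.Coloring (α × β)) : Setoid V :=
  (Γ.sameValueGraph fun v => (c v).1).reachableSetoid

theorem fst_eq_of_fstPartition {c : Γ.Coloring (α × β)} (hc : c.fstPartition = r) {v w : V}
    (h : r v w) : (c v).1 = (c w).1 := by
  subst hc
  exact Reachable.apply_eq_of_sameValueGraph (f := fun v => (c v).1) h

theorem fstPartition_rel_of_adj {c : Γ.Coloring (α × β)} {v w : V} (hadj : Γ.Adj v w)
    (h : (c v).1 = (c w).1) : c.fstPartition v w :=
  Adj.reachable (G := Γ.sameValueGraph _) ⟨hadj, h⟩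

def toContract (c : Γ.Coloring (α × β)) (hc : c.fstPartition = r) :
    (contractSetoid Γ r).Coloring α :=
  Coloring.mk (Quotient.lift (fun v => (c v).1) fun _ _ => fst_eq_of_fstPartition hc) <| by
    rintro _ _ hadj
    obtain ⟨hne, v, w, rfl, rfl, hvw⟩ := contractSetoid_adj_iff.1 hadj
    exact fun h => hne (Quotient.sound (hc ▸ fstPartition_rel_of_adj hvw h))

def restrictBlock (c : Γ.Coloring (α × β)) (hc : c.fstPartition = r) (q : Quotient r) :
    (Γ.induce {w | Quotient.mk r w = q}).Coloring β :=
  Coloring.mk (fun v => (c v).2) fun {v w} hadj h =>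
    c.valid hadj (Prod.ext (fst_eq_of_fstPartition hc (Quotient.exact (v.2.trans w.2.symm))) h)

theorem apply_mk_eq_of_mk_eq (G : ∀ q, (Γ.induce {w | Quotient.mk r w = q}).Coloring β)
    {v : V} {q : Quotient r} (hv : Quotient.mk r v = q) : G _ ⟨v, rfl⟩ = G q ⟨v, hv⟩ := by
  subst hv
  rfl

def glue (F : (contractSetoid Γ r).Coloring α)
    (G : ∀ q, (Γ.induce {w | Quotient.mk r w = q}).Coloring β) : Γ.Coloring (α × β) :=
  Coloring.mk (fun v => (F (Quotient.mk r v), G _ ⟨v, rfl⟩)) <| by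
    intro v w hadj h
    by_cases hvw : Quotient.mk r v = Quotient.mk r w
    · refine (G _).valid (v := ⟨v, hvw⟩) (w := ⟨w, rfl⟩) hadj ?_
      rw [← apply_mk_eq_of_mk_eq G hvw]
      exact congrArg Prod.snd h
    · exact F.valid (contractSetoid_adj_iff.2 ⟨hvw, v, w, rfl, rfl, hadj⟩) (congrArg Prod.fst h)

theorem fstPartition_glue (hr : IsGraphPartition Γ r) (F : (contractSetoid Γ r).Coloring α)
    (G : ∀ q, (Γ.induce {w | Quotient.mk r w = q}).Coloring β) :
    (glue F G).fstPartition = r := by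
  refine (reachableSetoid_sameValueGraph_eq_iff hr).2 ⟨fun v w h => ?_, fun v w hadj h => ?_⟩
  · exact congrArg F (Quotient.sound h)
  · by_contra hvw
    exact F.valid
      (contractSetoid_adj_iff.2 ⟨fun h => hvw (Quotient.exact h), v, w, rfl, rfl, hadj⟩) h

def fstPartitionEquiv (hr : IsGraphPartition Γ r) :
    {c : Γ.Coloring (α × β) // c.fstPartition = r} ≃
      (contractSetoid Γ r).Coloring α × ∀ q, (Γ.induce {w | Quotient.mk r w = q}).Coloring β where
  toFun c := (toContract c.1 c.2, restrictBlock c.1 c.2)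
  invFun FG := ⟨glue FG.1 FG.2, fstPartition_glue hr FG.1 FG.2⟩
  left_inv _ := Subtype.ext (RelHom.ext fun _ => rfl)
  right_inv FG := Prod.ext (RelHom.ext (Quotient.ind fun _ => rfl))
    (funext fun _ => RelHom.ext fun v => apply_mk_eq_of_mk_eq FG.2 v.2)

theorem card_fstPartition_eq [Fintype V] (r : Setoid V) :
    Nat.card {c : Γ.Coloring (α × β) // c.fstPartition = r} =
      if IsGraphPartition Γ r then
        Nat.card ((contractSetoid Γ r).Coloring α) *
          ∏ q : Quotient r, Nat.card ((Γ.induce {w | Quotient.mk r w = q}).Coloring β)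
      else 0 := by
  split_ifs with hr
  · rw [Nat.card_congr (fstPartitionEquiv hr), Nat.card_prod, Nat.card_pi]
  · have : IsEmpty {c : Γ.Coloring (α × β) // c.fstPartition = r} :=
      ⟨fun c => hr (c.2 ▸ isGraphPartition_reachableSetoid sameValueGraph_le)⟩
    exact Nat.card_of_isEmpty

end Coloring

end SimpleGraph

theorem stmt5_general {V : Type} [Fintype V] (Γ : SimpleGraph V)
    (x y : ℕ) :
    properColorings Γ (x * y) =
      ∑ r : Setoid V, if IsGraphPartition Γ r then
          properColorings (contractSetoid Γ r) x *
            ∏ q : Quotient r, properColorings (Γ.induce {w | Quotient.mk r w = q}) y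
        else 0 := by
  calc properColorings Γ (x * y) = Nat.card (Γ.Coloring (Fin x × Fin y)) := by
        rw [properColorings_eq_card_coloring]
        exact Nat.card_congr (recolorOfEquiv Γ finProdFinEquiv.symm)
    _ = ∑ r : Setoid V, Nat.card {c : Γ.Coloring (Fin x × Fin y) // c.fstPartition = r} := by
        rw [← Nat.card_sigma]
        exact Nat.card_congr (Equiv.sigmaFiberEquiv Coloring.fstPartition).symm
    _ = _ := by simp only [Coloring.card_fstPartition_eq, properColorings_eq_card_coloring]

/-- Multiplicative identity for the chromatic polynomial: for a connected graph `Γ`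
and positive integers `x, y`,
`χ_Γ(xy) = Σ_{I ⊢ Γ} χ_{Γ/I}(x) · Π_{G ∈ I} χ_{Γ|_G}(y)`,
the sum ranging over all partitions of the vertex set into tubes. -/
theorem stmt5 {V : Type} [Fintype V] (Γ : SimpleGraph V) (hΓ : Γ.Connected)
    (x y : ℕ) (hx : 0 < x) (hy : 0 < y) :
    properColorings Γ (x * y) =
      ∑ r : Setoid V, if IsGraphPartition Γ r then
          properColorings (contractSetoid Γ r) x *
            ∏ q : Quotient r, properColorings (Γ.induce {w | Quotient.mk r w = q}) y
        else 0 :=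
  stmt5_general Γ x y
end

section
/- The chromatic polynomial of the complete multipartite graph K_λ with blocks of sizes λ₁, ..., λ_k evaluated at q equals λ₁!···λ_k! times the coefficient extraction Σ_{μ ≤ λ} binom(q, l(μ)) · multinomial(l(μ); m(μ)) · L_{μλ}/μ!, where L_{μλ} is the number of l(λ)×l(μ) nonnegative integer matrices with column sums μ, row sums λ, and exactly one nonzero entry per column. Equivalently: the generating function Σ_λ χ_{K_λ}(q) m_λ/λ! over all partitions λ equals (1 + Σ_{n≥1} p_n/n!)^q in the ring of symmetric functions, where m_λ are monomial symmetric functions and p_n are power sums. -/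
open scoped Classical

noncomputable def expX {k : ℕ} (j : Fin k) : MvPowerSeries (Fin k) ℚ :=
  fun d => if d.support ⊆ {j} then (1 : ℚ) / (Nat.factorial (d j)) else 0

/-!
Record a colouring `f` of `K_λ` with colours `β` by its block profile: for each colour `c`, the
vector `blockCount f c` counting the vertices of each block that get colour `c`. The colouring is
proper iff every profile is supported on a single block. The colourings with a prescribed profile
`l` number `∏ᵢ multinomial(λᵢ; (l c i)_c) = λ! / ∏_c (l c)!`, which is exactly the weight an
exponential generating function puts on `x^λ`; hence for every power series `G`,
`λ! [x^λ] G^|β| = ∑_f ∏_c (blockCount f c)! [x^(blockCount f c)] G`.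
For `G = 1 + ∑ⱼ (exp xⱼ - 1)`, whose coefficient at `μ` is `1/μ!` if `μ` lives on at most one
block and `0` otherwise, each summand is `1` or `0` according as `f` is proper.
-/

open Finset
open scoped Nat

theorem card_filter_card_fiber_eq_multinomial {α β : Type*} [Fintype α] [Fintype β]
    [DecidableEq β] (t : β → ℕ) (ht : ∑ c, t c = Fintype.card α) :
    #{g : α → β | ∀ c, #{a | g a = c} = t c} = Nat.multinomial univ t := by
  -- both sides are the coefficient of `X ^ t` in `(∑ c, X c) ^ card α`
  open MvPolynomial in
  have hexpand : (∑ c, X c : MvPolynomial β ℕ) ^ Fintype.card α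
      = ∑ g : α → β, ∏ c, X c ^ #{a | g a = c} :=
    calc (∑ c, X c : MvPolynomial β ℕ) ^ Fintype.card α = ∏ _a : α, ∑ c, X c := by
          rw [prod_const, card_univ]
      _ = ∑ g : α → β, ∏ a, X (g a) := Fintype.prod_sum _
      _ = ∑ g : α → β, ∏ c, X c ^ #{a | g a = c} := by
          refine sum_congr rfl fun g _ => ?_
          rw [← prod_fiberwise univ g]
          refine prod_congr rfl fun c _ => ?_
          rw [prod_congr rfl fun a ha => by rw [(mem_filter.mp ha).2], prod_const]
  have hcoeff := MvPolynomial.coeff_sum_X_pow_of_fintype (R := ℕ)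
    (Finsupp.equivFunOnFinite.symm t) (Fintype.card α)
  rw [hexpand, MvPolynomial.coeff_sum, Finsupp.sum_fintype _ _ fun _ => rfl,
    ← Finsupp.multinomial_of_support_subset (subset_univ _)] at hcoeff
  simpa [MvPolynomial.coeff_prod_X_pow, sum_boole, Finsupp.ext_iff, eq_comm, ht] using hcoeff

section blockCount

variable {ι β : Type*} {α : ι → Type*} [Fintype ι] [∀ i, Fintype (α i)] [Fintype β]
  [DecidableEq β]

noncomputable def blockCount (f : (Σ i, α i) → β) : β →₀ ι →₀ ℕ :=
  Finsupp.equivFunOnFinite.symm fun c =>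
    Finsupp.equivFunOnFinite.symm fun i => #{x | f ⟨i, x⟩ = c}

@[simp]
lemma blockCount_apply (f : (Σ i, α i) → β) (c : β) (i : ι) :
    blockCount f c i = #{x | f ⟨i, x⟩ = c} :=
  rfl

lemma mem_support_blockCount {f : (Σ i, α i) → β} {c : β} {i : ι} :
    i ∈ (blockCount f c).support ↔ ∃ x, f ⟨i, x⟩ = c := by
  simp [Finsupp.mem_support_iff]

lemma forall_card_support_blockCount_le_one_iff (f : (Σ i, α i) → β) :
    (∀ c, #(blockCount f c).support ≤ 1) ↔ ∀ v w : Σ i, α i, v.1 ≠ w.1 → f v ≠ f w := by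
  simp only [card_le_one, mem_support_blockCount]
  constructor
  · rintro h ⟨i, x⟩ ⟨j, y⟩ hij hf
    exact hij (h _ i ⟨x, hf⟩ j ⟨y, rfl⟩)
  · rintro h c i ⟨x, rfl⟩ j ⟨y, hy⟩
    by_contra hij
    exact h ⟨i, x⟩ ⟨j, y⟩ hij hy.symm

lemma blockCount_mem_finsuppAntidiag (f : (Σ i, α i) → β) :
    blockCount f ∈
      finsuppAntidiag univ (Finsupp.equivFunOnFinite.symm fun i => Fintype.card (α i)) := by
  refine mem_finsuppAntidiag.mpr ⟨Finsupp.ext fun i => ?_, subset_univ _⟩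
  rw [Finsupp.finsetSum_apply, Finsupp.coe_equivFunOnFinite_symm, ← card_univ]
  exact (card_eq_sum_card_fiberwise fun x _ => mem_univ (f ⟨i, x⟩)).symm

lemma card_filter_blockCount_eq (l : β →₀ ι →₀ ℕ) :
    #{f : (Σ i, α i) → β | blockCount f = l}
      = ∏ i, #{g : α i → β | ∀ c, #{x | g x = c} = l c i} := by
  have hiff (f : (Σ i, α i) → β) :
      blockCount f = l ↔ ∀ i c, #{x | Sigma.curry f i x = c} = l c i := by
    simp only [Finsupp.ext_iff, blockCount_apply, Sigma.curry]
    exact forall_comm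
  calc #{f : (Σ i, α i) → β | blockCount f = l}
      = Fintype.card {f : (Σ i, α i) → β // blockCount f = l} := (Fintype.card_subtype _).symm
    _ = Fintype.card ((i : ι) → {g : α i → β // ∀ c, #{x | g x = c} = l c i}) :=
      Fintype.card_congr <|
        (Equiv.subtypeEquiv (q := fun g => ∀ i c, #{x | g i x = c} = l c i)
          (Equiv.piCurry fun _ _ => β) hiff).trans
        (Equiv.subtypePiEquivPi (p := fun i (g : α i → β) => ∀ c, #{x | g x = c} = l c i))
    _ = ∏ i, #{g : α i → β | ∀ c, #{x | g x = c} = l c i} := by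
      simp only [Fintype.card_pi, Fintype.card_subtype]

lemma card_filter_blockCount_eq_mul_prod_factorial {l : β →₀ ι →₀ ℕ}
    (hl : l ∈ finsuppAntidiag univ (Finsupp.equivFunOnFinite.symm fun i => Fintype.card (α i))) :
    #{f : (Σ i, α i) → β | blockCount f = l} * ∏ c, ∏ i, (l c i)!
      = ∏ i, (Fintype.card (α i))! := by
  have hsum (i : ι) : ∑ c, l c i = Fintype.card (α i) := by
    simpa [Finsupp.finsetSum_apply] using congrArg (· i) (mem_finsuppAntidiag.mp hl).1
  rw [card_filter_blockCount_eq, prod_comm, ← prod_mul_distrib]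
  refine prod_congr rfl fun i _ => ?_
  rw [card_filter_card_fiber_eq_multinomial _ (hsum i), mul_comm, Nat.multinomial_spec, hsum i]

theorem cast_prod_factorial_mul_coeff_pow {R : Type*} [CommSemiring R]
    (G : MvPowerSeries ι R) :
    ((∏ i, (Fintype.card (α i))! : ℕ) : R) *
        MvPowerSeries.coeff (Finsupp.equivFunOnFinite.symm fun i => Fintype.card (α i))
          (G ^ Fintype.card β)
      = ∑ f : (Σ i, α i) → β,
          ∏ c, ((∏ i, (blockCount f c i)! : ℕ) : R) * MvPowerSeries.coeff (blockCount f c) G := by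
  rw [← card_univ, ← prod_const, MvPowerSeries.coeff_prod, mul_sum,
    ← sum_fiberwise_of_maps_to fun f _ => blockCount_mem_finsuppAntidiag f]
  refine sum_congr rfl fun l hl => ?_
  rw [sum_congr rfl fun f hf => by rw [(mem_filter.mp hf).2], sum_const, nsmul_eq_mul,
    prod_mul_distrib, ← mul_assoc, ← Nat.cast_prod, ← Nat.cast_mul,
    card_filter_blockCount_eq_mul_prod_factorial hl]

end blockCount

lemma coeff_expX {k : ℕ} (μ : Fin k →₀ ℕ) (j : Fin k) :
    MvPowerSeries.coeff μ (expX j)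
      = if μ.support ⊆ {j} then ((∏ i, (μ i)! : ℕ) : ℚ)⁻¹ else 0 := by
  change (if μ.support ⊆ {j} then _ else _) = _
  refine if_ctx_congr Iff.rfl (fun h => ?_) fun _ => rfl
  rw [one_div, Fintype.prod_eq_single j fun i hi => ?_]
  rw [Finsupp.notMem_support_iff.mp fun hμ => hi (mem_singleton.mp (h hμ)), Nat.factorial_zero]

lemma coeff_one_add_sum_expX_sub_one {k : ℕ} (μ : Fin k →₀ ℕ) :
    MvPowerSeries.coeff μ (1 + ∑ j, (expX j - 1))
      = if #μ.support ≤ 1 then ((∏ i, (μ i)! : ℕ) : ℚ)⁻¹ else 0 := by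
  simp only [map_add, map_sum, map_sub, MvPowerSeries.coeff_one, coeff_expX]
  rcases eq_or_ne μ 0 with rfl | hμ
  · simp
  simp only [if_neg hμ, sub_zero, zero_add]
  by_cases hcard : #μ.support ≤ 1
  · have hpos : 0 < #μ.support := card_pos.mpr (Finsupp.support_nonempty_iff.mpr hμ)
    obtain ⟨j, hj⟩ := card_eq_one.mp (le_antisymm hcard hpos)
    simp [hj]
  · rw [if_neg hcard]
    exact sum_eq_zero fun j _ =>
      if_neg fun hj => hcard ((card_le_card hj).trans (card_singleton j).le)

lemma properColorings_completeMultipartiteGraph {ι : Type*} [Fintype ι] (α : ι → Type*)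
    [∀ i, Fintype (α i)] (q : ℕ) :
    properColorings (SimpleGraph.completeMultipartiteGraph α) q
      = #{f : (Σ i, α i) → Fin q | ∀ c, #(blockCount f c).support ≤ 1} := by
  rw [properColorings, Nat.card_eq_fintype_card, Fintype.card_subtype]
  simp only [forall_card_support_blockCount_le_one_iff]
  rfl

/-- The generating function identity
`Σ_λ χ_{K_λ}(q) m_λ/λ! = (1 + Σ_{n≥1} p_n/n!)^q`
for chromatic polynomials of complete multipartite graphs, stated coefficientwise
in `k` variables: the coefficient of the monomial `x^λ = Π_i x_i^(λ i)` in
`(1 + Σ_j (exp(x_j) − 1))^q` equals `χ_{K_λ}(q)/λ!`.  (Note that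
`1 + Σ_n p_n/n! = 1 + Σ_j (e^{x_j} − 1)` in `k` variables.) -/
theorem stmt6 (k : ℕ) (lam : Fin k → ℕ) (q : ℕ) :
    (properColorings (SimpleGraph.completeMultipartiteGraph (fun i : Fin k => Fin (lam i))) q : ℚ) =
      (∏ i : Fin k, (Nat.factorial (lam i)) : ℕ) *
        MvPowerSeries.coeff (Finsupp.equivFunOnFinite.symm lam)
          ((1 + ∑ j : Fin k, (expX j - 1)) ^ q) := by
  have hegf := cast_prod_factorial_mul_coeff_pow (α := fun i => Fin (lam i)) (β := Fin q)
    (1 + ∑ j, (expX j - 1))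
  simp only [Fintype.card_fin] at hegf
  rw [hegf, properColorings_completeMultipartiteGraph]
  have hne (μ : Fin k →₀ ℕ) : ((∏ i, (μ i)! : ℕ) : ℚ) ≠ 0 := by positivity
  simp only [coeff_one_add_sum_expX_sub_one, mul_ite, mul_zero, mul_inv_cancel₀ (hne _),
    Fintype.prod_boole]
  convert natCast_card_filter (R := ℚ) _ _
end

section
/- For graphic functions f and g, the path generating functions F_P(f)(t) = Σ_{n≥1} f(P_n) t^n satisfy F_P(f * g)(t) = F_P(f)(F_P(g)(t)), where * is the contraction convolution of graphic functions. -/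
open scoped Classical

/-- A "graphic function" with values in `k`: a rule assigning an element of `k`
to every finite simple graph. -/
def GF (k : Type*) : Type _ := (V : Type) → Fintype V → SimpleGraph V → k

/-- A graphic function is honest (constant on isomorphism classes) if it is
invariant under graph isomorphisms. -/
def IsoInvariant {k : Type*} (f : GF k) : Prop :=
  ∀ (V W : Type) (iV : Fintype V) (iW : Fintype W)
    (Γ : SimpleGraph V) (Δ : SimpleGraph W), Nonempty (Γ ≃g Δ) → f V iV Γ = f W iW Δ

/-- The convolution product of graphic functions:
`(φ * ψ)(Γ) = Σ_{I ⊢ Γ} φ(Γ/I) · Π_{G ∈ I} ψ(Γ|_G)`, the sum ranging over all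
partitions of the vertex set of `Γ` into tubes. -/
noncomputable def conv {k : Type*} [CommRing k] (f g : GF k) : GF k := fun V iV Γ =>
  letI := iV
  ∑ r : Setoid V, if IsGraphPartition Γ r then
      f (Quotient r) (Fintype.ofFinite _) (contractSetoid Γ r) *
        ∏ q : Quotient r, g {w : V // Quotient.mk r w = q} (Fintype.ofFinite _)
          (Γ.induce {w | Quotient.mk r w = q})
    else 0

/-- The unit graphic function `ε`, nonzero only on the one-vertex graph. -/
def epsGF {k : Type*} [CommRing k] : GF k := fun V iV _ =>
  if @Fintype.card V iV = 1 then 1 else 0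


namespace PGF

open SimpleGraph

variable {n : ℕ}

/-! ### Composition index lemmas -/

lemma index_eq_iff (c : Composition n) (j : Fin n) (i : Fin c.length) :
    c.index j = i ↔ c.sizeUpTo i ≤ (j : ℕ) ∧ (j : ℕ) < c.sizeUpTo ((i : ℕ) + 1) := by
  rw [eq_comm, ← c.mem_range_embedding_iff', c.mem_range_embedding_iff, Nat.succ_eq_add_one]

lemma mem_boundaries_iff (c : Composition n) (m : Fin (n + 1)) :
    m ∈ c.boundaries ↔ ∃ k, k ≤ c.length ∧ c.sizeUpTo k = (m : ℕ) := by
  simp only [Composition.boundaries, Finset.mem_map, Finset.mem_univ, true_and,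
    Composition.boundary, OrderEmbedding.coe_ofStrictMono, Fin.ext_iff]
  constructor
  · rintro ⟨k, hk⟩
    exact ⟨k, by omega, hk⟩
  · rintro ⟨k, hk, hk2⟩
    exact ⟨⟨k, by omega⟩, hk2⟩

lemma index_mono (c : Composition n) : Monotone c.index := by
  intro j j' h
  by_contra hlt
  push_neg at hlt
  have h1 : c.sizeUpTo ((c.index j' : ℕ) + 1) ≤ c.sizeUpTo (c.index j) :=
    c.monotone_sizeUpTo (by exact_mod_cast hlt)
  have h2 := c.sizeUpTo_index_le j
  have h3 := c.lt_sizeUpTo_index_succ j'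
  simp only [Fin.val_succ] at h3
  omega

lemma index_succ_le (c : Composition n) (j : ℕ) (h : j + 1 < n) :
    (c.index ⟨j + 1, h⟩ : ℕ) ≤ (c.index ⟨j, by omega⟩ : ℕ) + 1 := by
  by_contra hlt
  push_neg at hlt
  set i := c.index ⟨j, by omega⟩ with hi
  set i' := c.index ⟨j + 1, h⟩ with hi'
  have h1 : c.sizeUpTo ((i : ℕ) + 1 + 1) ≤ c.sizeUpTo (i' : ℕ) := c.monotone_sizeUpTo (by omega)
  have h2 := c.sizeUpTo_index_le ⟨j + 1, h⟩
  have h3 := c.lt_sizeUpTo_index_succ (⟨j, by omega⟩ : Fin n)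
  have h4 : c.sizeUpTo ((i : ℕ) + 1) < c.sizeUpTo ((i : ℕ) + 1 + 1) :=
    c.sizeUpTo_strict_mono (by have := i'.2; omega)
  simp only [Fin.val_succ, ← hi, ← hi'] at h2 h3
  omega

lemma index_succ_cases (c : Composition n) (j : ℕ) (h : j + 1 < n) :
    c.index ⟨j + 1, h⟩ = c.index ⟨j, by omega⟩ ∨
      (c.index ⟨j + 1, h⟩ : ℕ) = (c.index ⟨j, by omega⟩ : ℕ) + 1 := by
  have h1 := index_mono c (show (⟨j, by omega⟩ : Fin n) ≤ ⟨j + 1, h⟩ by simp)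
  have h2 := index_succ_le c j h
  rcases eq_or_lt_of_le h1 with heq | hlt
  · exact Or.inl heq.symm
  · right
    have : (c.index ⟨j, by omega⟩ : ℕ) < (c.index ⟨j + 1, h⟩ : ℕ) := hlt
    omega

lemma break_iff (c : Composition n) (j : ℕ) (h : j + 1 < n) :
    c.index ⟨j, by omega⟩ ≠ c.index ⟨j + 1, h⟩ ↔
      (⟨j + 1, by omega⟩ : Fin (n + 1)) ∈ c.boundaries := by
  rw [mem_boundaries_iff]
  constructor
  · intro hne
    have hval : (c.index ⟨j + 1, h⟩ : ℕ) = (c.index ⟨j, by omega⟩ : ℕ) + 1 := by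
      rcases index_succ_cases c j h with h1 | h1
      · exact absurd h1.symm hne
      · exact h1
    have h2 := c.sizeUpTo_index_le (⟨j + 1, h⟩ : Fin n)
    have h3 := c.lt_sizeUpTo_index_succ (⟨j, by omega⟩ : Fin n)
    simp only [Fin.val_succ, Fin.val_mk] at h2 h3
    refine ⟨(c.index ⟨j, by omega⟩ : ℕ) + 1, by have := (c.index ⟨j + 1, h⟩).2; omega, ?_⟩
    have h5 : c.sizeUpTo (c.index ⟨j + 1, h⟩ : ℕ) =
        c.sizeUpTo ((c.index ⟨j, by omega⟩ : ℕ) + 1) := by rw [hval]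
    simp only [Fin.val_mk]
    omega
  · rintro ⟨m, hm, hm'⟩ hne
    have h2 := c.sizeUpTo_index_le (⟨j, by omega⟩ : Fin n)
    have h3 := c.lt_sizeUpTo_index_succ (⟨j + 1, h⟩ : Fin n)
    rw [hne] at h2
    simp only [Fin.val_succ, Fin.val_mk] at h2 h3 hm'
    have hik : (c.index ⟨j + 1, h⟩ : ℕ) < m := by
      by_contra hle
      push_neg at hle
      have := c.monotone_sizeUpTo hle
      omega
    have hki : m ≤ (c.index ⟨j + 1, h⟩ : ℕ) := by
      by_contra hle
      push_neg at hle
      have := c.monotone_sizeUpTo (show (c.index ⟨j + 1, h⟩ : ℕ) + 1 ≤ m by omega)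
      omega
    omega

lemma index_surj (c : Composition n) : Function.Surjective c.index := by
  intro i
  have h1 : c.sizeUpTo i < c.sizeUpTo ((i : ℕ) + 1) := c.sizeUpTo_strict_mono i.2
  have h2 : c.sizeUpTo ((i : ℕ) + 1) ≤ n := c.sizeUpTo_le _
  refine ⟨⟨c.sizeUpTo i, by omega⟩, ?_⟩
  rw [index_eq_iff]
  exact ⟨le_refl _, h1⟩

/-! ### Convex setoids -/

/-- Every setoid class is order-convex. -/
def Convex' (r : Setoid (Fin n)) : Prop :=
  ∀ a b x : Fin n, a ≤ x → x ≤ b → r a b → r a x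

lemma ker_convex (c : Composition n) : Convex' (Setoid.ker c.index) := by
  intro a b x hax hxb hab
  have h1 := index_mono c hax
  have h2 := index_mono c hxb
  have hab' : c.index a = c.index b := hab
  exact (le_antisymm (hab' ▸ h2) h1).symm

/-- A convex setoid is determined by which consecutive pairs are related. -/
lemma setoid_eq_of_consecutive {r r' : Setoid (Fin n)} (hr : Convex' r) (hr' : Convex' r')
    (h : ∀ j (hj : j + 1 < n), r ⟨j, by omega⟩ ⟨j + 1, hj⟩ ↔ r' ⟨j, by omega⟩ ⟨j + 1, hj⟩) :
    r = r' := by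
  have key : ∀ (s : Setoid (Fin n)), Convex' s → ∀ a b : Fin n, a ≤ b →
      (s a b ↔ ∀ j (hj : j + 1 < n), (a : ℕ) ≤ j → j + 1 ≤ (b : ℕ) →
        s ⟨j, by omega⟩ ⟨j + 1, hj⟩) := by
    intro s hs a b hab
    constructor
    · intro hsab j hj haj hjb
      have h1 : s a ⟨j, by omega⟩ := hs a b ⟨j, by omega⟩ (by simp [Fin.le_def]; omega)
        (by simp [Fin.le_def]; omega) hsab
      have h2 : s a ⟨j + 1, hj⟩ := hs a b ⟨j + 1, hj⟩ (by simp [Fin.le_def]; omega)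
        (by simp [Fin.le_def]; omega) hsab
      exact s.trans (s.symm h1) h2
    · intro hchain
      have H : ∀ m : ℕ, (a : ℕ) ≤ m → ∀ (hm : m < n), m ≤ (b : ℕ) → s a ⟨m, hm⟩ := by
        intro m
        induction m with
        | zero =>
          intro ham hm _
          have : a = ⟨0, hm⟩ := Fin.ext (by simp; omega)
          exact this ▸ s.refl a
        | succ m ih =>
          intro ham hm hmb
          rcases Nat.lt_or_ge (a : ℕ) (m + 1) with hlt | hge
          · have hk : s a ⟨m, by omega⟩ := ih (by omega) (by omega) (by omega)
            exact s.trans hk (hchain m hm (by omega) hmb)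
          · have : a = ⟨m + 1, hm⟩ := Fin.ext (by simp; omega)
            exact this ▸ s.refl a
      have := H (b : ℕ) hab b.2 le_rfl
      simpa using this
  have main : ∀ a b : Fin n, a ≤ b → (r a b ↔ r' a b) := by
    intro a b hab
    rw [key r hr a b hab, key r' hr' a b hab]
    exact forall_congr' fun j => forall_congr' fun hj =>
      forall_congr' fun _ => forall_congr' fun _ => h j hj
  apply Setoid.ext
  intro a b
  rcases le_total a b with hab | hba
  · exact main a b hab
  · exact ⟨fun h1 => r'.symm ((main b a hba).mp (r.symm h1)),
      fun h1 => r.symm ((main b a hba).mpr (r'.symm h1))⟩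

/-! ### Connectivity in path graphs -/

/-- Intermediate value for walks in induced subgraphs of path graphs. -/
lemma walk_mem_of_between {S : Set (Fin n)} :
    ∀ {u v : S} (_ : ((pathGraph n).induce S).Walk u v) (b : Fin n),
      ((u : Fin n) : ℕ) ≤ (b : ℕ) → ((b : ℕ) ≤ ((v : Fin n) : ℕ)) → b ∈ S := by
  intro u v p
  induction p with
  | nil =>
    rename_i w
    intro b h1 h2
    have : b = (w : Fin n) := Fin.ext (le_antisymm h2 h1)
    exact this ▸ w.2
  | @cons x y z hadj p ih =>
    intro b h1 h2
    rcases Nat.eq_or_lt_of_le h1 with heq | hlt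
    · have : b = (x : Fin n) := Fin.ext (by omega)
      exact this ▸ x.2
    · have hadj' : (pathGraph n).Adj (x : Fin n) (y : Fin n) := hadj
      rw [pathGraph_adj] at hadj'
      apply ih b _ h2
      omega

lemma gp_convex {r : Setoid (Fin n)} (hr : IsGraphPartition (pathGraph n) r) : Convex' r := by
  intro a b x hax hxb hab
  have hconn := hr b
  have ha : a ∈ {w | r w b} := hab
  have hb : b ∈ {w | r w b} := r.refl b
  obtain ⟨p⟩ := hconn.preconnected ⟨a, ha⟩ ⟨b, hb⟩
  have hx : x ∈ {w | r w b} := walk_mem_of_between p x hax hxb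
  exact r.trans hab (r.symm hx)

/-- A nonempty convex set induces a connected subgraph of the path graph. -/
lemma convex_set_connected (S : Set (Fin n)) (hne : S.Nonempty)
    (hconv : ∀ a b x : Fin n, a ∈ S → b ∈ S → a ≤ x → x ≤ b → x ∈ S) :
    ((pathGraph n).induce S).Connected := by
  have step : ∀ (u w : S), ((w : Fin n) : ℕ) = ((u : Fin n) : ℕ) + 1 →
      ((pathGraph n).induce S).Adj u w := by
    intro u w h
    show (pathGraph n).Adj (u : Fin n) (w : Fin n)
    rw [pathGraph_adj]
    omega
  have reach : ∀ (d : ℕ) (u w : S), ((w : Fin n) : ℕ) = ((u : Fin n) : ℕ) + d →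
      ((pathGraph n).induce S).Reachable u w := by
    intro d
    induction d with
    | zero =>
      intro u w h
      have : u = w := Subtype.ext (Fin.ext (by omega))
      exact this ▸ SimpleGraph.Reachable.refl u
    | succ m ih =>
      intro u w h
      have hw := (w : Fin n).2
      have hmem : (⟨((u : Fin n) : ℕ) + m, by omega⟩ : Fin n) ∈ S :=
        hconv (u : Fin n) (w : Fin n) _ u.2 w.2 (by simp [Fin.le_def]) (by simp [Fin.le_def]; omega)
      have h1 := ih u ⟨_, hmem⟩ (by simp)
      exact h1.trans (step _ w (by simp; omega)).reachable
  rw [SimpleGraph.connected_iff]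
  refine ⟨?_, ⟨⟨hne.choose, hne.choose_spec⟩⟩⟩
  intro u w
  rcases le_total ((u : Fin n) : ℕ) ((w : Fin n) : ℕ) with h | h
  · exact reach (((w : Fin n) : ℕ) - ((u : Fin n) : ℕ)) u w (by omega)
  · exact (reach (((u : Fin n) : ℕ) - ((w : Fin n) : ℕ)) w u (by omega)).symm

/-- `Setoid.ker c.index` is a graph partition of the path graph. -/
lemma gp_ker (c : Composition n) : IsGraphPartition (pathGraph n) (Setoid.ker c.index) := by
  intro v
  refine convex_set_connected {w | (Setoid.ker c.index) w v}
    ⟨v, (Setoid.ker c.index).refl v⟩ ?_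
  intro a b x ha hb hax hxb
  have ha' : c.index a = c.index v := ha
  have hb' : c.index b = c.index v := hb
  have h1 := index_mono c hax
  have h2 := index_mono c hxb
  show c.index x = c.index v
  rw [ha'] at h1
  rw [hb'] at h2
  exact le_antisymm h2 h1

/-! ### Injectivity -/

lemma ker_index_inj {c c' : Composition n}
    (h : Setoid.ker c.index = Setoid.ker c'.index) : c = c' := by
  have hrel : ∀ a b : Fin n, c.index a = c.index b ↔ c'.index a = c'.index b := by
    intro a b
    have := Setoid.ext_iff.mp h a b
    exact this
  have hb : c.boundaries = c'.boundaries := by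
    ext m
    rcases Nat.eq_zero_or_pos (m : ℕ) with h0 | h0
    · simp only [mem_boundaries_iff]
      constructor <;> intro _
      · exact ⟨0, by omega, by simp [Composition.sizeUpTo_zero, h0]⟩
      · exact ⟨0, by omega, by simp [Composition.sizeUpTo_zero, h0]⟩
    · rcases Nat.lt_or_ge (m : ℕ) n with hmn | hmn
      · have hj : ((m : ℕ) - 1) + 1 < n := by omega
        have hm : m = (⟨((m : ℕ) - 1) + 1, by omega⟩ : Fin (n + 1)) := Fin.ext (by simp; omega)
        rw [hm, ← break_iff c _ hj, ← break_iff c' _ hj]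
        rw [not_iff_not.symm, not_not, not_not]
        exact hrel _ _
      · have hmn' : (m : ℕ) = n := by have := m.2; omega
        simp only [mem_boundaries_iff]
        constructor <;> intro _
        · exact ⟨c'.length, le_rfl, by rw [Composition.sizeUpTo_length]; omega⟩
        · exact ⟨c.length, le_rfl, by rw [Composition.sizeUpTo_length]; omega⟩
  apply (compositionEquiv n).injective
  show c.toCompositionAsSet = c'.toCompositionAsSet
  ext1
  rw [Composition.toCompositionAsSet_boundaries, Composition.toCompositionAsSet_boundaries]
  exact hb

/-! ### Surjectivity -/

lemma ker_index_surj (r : Setoid (Fin n)) (hr : IsGraphPartition (pathGraph n) r) :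
    ∃ c : Composition n, Setoid.ker c.index = r := by
  classical
  set B : Finset (Fin (n + 1)) := Finset.univ.filter fun m =>
    (m : ℕ) = 0 ∨ (m : ℕ) = n ∨
      ∃ (j : ℕ) (hj : j + 1 < n), (m : ℕ) = j + 1 ∧ ¬ r ⟨j, by omega⟩ ⟨j + 1, hj⟩ with hB
  have cas : CompositionAsSet n :=
    ⟨B, by simp [hB], by simp [hB, Fin.last]⟩
  refine ⟨(⟨B, by simp [hB], by simp [hB, Fin.last]⟩ : CompositionAsSet n).toComposition, ?_⟩
  set c := (⟨B, by simp [hB], by simp [hB, Fin.last]⟩ : CompositionAsSet n).toComposition with hc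
  have hbd : c.boundaries = B := CompositionAsSet.toComposition_boundaries _
  apply setoid_eq_of_consecutive (ker_convex c) (gp_convex hr)
  intro j hj
  have hmem : ((⟨j + 1, by omega⟩ : Fin (n + 1)) ∈ c.boundaries) ↔ ¬ r ⟨j, by omega⟩ ⟨j + 1, hj⟩ := by
    rw [hbd, hB]
    simp only [Finset.mem_filter, Finset.mem_univ, true_and, Fin.val_mk]
    constructor
    · rintro (h0 | hn' | ⟨j', hj', hjj', hnr⟩)
      · omega
      · omega
      · have : j' = j := by omega
        subst this
        exact hnr
    · intro hnr
      exact Or.inr (Or.inr ⟨j, hj, rfl, hnr⟩)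
  have hker : (Setoid.ker c.index) ⟨j, by omega⟩ ⟨j + 1, hj⟩ ↔
      ¬ ((⟨j + 1, by omega⟩ : Fin (n + 1)) ∈ c.boundaries) := by
    rw [← break_iff c j hj, not_not]
    exact Iff.rfl
  rw [hker, hmem, not_not]

/-! ### The contraction isomorphism -/

noncomputable def kerEquiv (c : Composition n) : Quotient (Setoid.ker c.index) ≃ Fin c.length :=
  Setoid.quotientKerEquivOfSurjective _ (index_surj c)

lemma kerEquiv_mk (c : Composition n) (j : Fin n) :
    kerEquiv c (Quotient.mk (Setoid.ker c.index) j) = c.index j := rfl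

lemma mk_eq_mk_iff (c : Composition n) (v w : Fin n) :
    Quotient.mk (Setoid.ker c.index) v = Quotient.mk (Setoid.ker c.index) w ↔
      c.index v = c.index w := by
  constructor
  · intro h
    exact Quotient.exact h
  · intro h
    exact Quotient.sound h

lemma adj_index (c : Composition n) {v w : Fin n} (hadj : (pathGraph n).Adj v w)
    (hne : c.index v ≠ c.index w) : (pathGraph c.length).Adj (c.index v) (c.index w) := by
  rw [pathGraph_adj] at hadj ⊢
  rcases hadj with h1 | h1
  · have hlt : (v : ℕ) + 1 < n := by have := w.2; omega
    have e1 : c.index ⟨(v : ℕ) + 1, hlt⟩ = c.index w := by congr 1; exact Fin.ext h1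
    have e2 : c.index ⟨(v : ℕ), by omega⟩ = c.index v := by congr 1
    rcases index_succ_cases c (v : ℕ) hlt with h2 | h2
    · exact absurd (e1.symm.trans (h2.trans e2)).symm hne
    · left
      rw [← e1, h2, e2]
  · have hlt : (w : ℕ) + 1 < n := by have := v.2; omega
    have e1 : c.index ⟨(w : ℕ) + 1, hlt⟩ = c.index v := by congr 1; exact Fin.ext h1
    have e2 : c.index ⟨(w : ℕ), by omega⟩ = c.index w := by congr 1
    rcases index_succ_cases c (w : ℕ) hlt with h2 | h2
    · exact absurd (e2.symm.trans (h2.symm.trans e1)).symm hne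
    · right
      rw [← e1, h2, e2]

lemma contract_adj (c : Composition n) (x y : Fin n) :
    (contractSetoid (pathGraph n) (Setoid.ker c.index)).Adj
        (Quotient.mk (Setoid.ker c.index) x) (Quotient.mk (Setoid.ker c.index) y) ↔
      (pathGraph c.length).Adj (c.index x) (c.index y) := by
  rw [contractSetoid, SimpleGraph.fromRel_adj]
  constructor
  · rintro ⟨hne, h | h⟩
    · obtain ⟨v, w, hv, hw, hvw⟩ := h
      have hv' : c.index v = c.index x := Quotient.exact hv
      have hw' : c.index w = c.index y := Quotient.exact hw
      have hne' : c.index v ≠ c.index w := by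
        intro h
        apply hne
        apply Quotient.sound
        show c.index x = c.index y
        rw [← hv', ← hw']
        exact h
      have := adj_index c hvw hne'
      rwa [hv', hw'] at this
    · obtain ⟨v, w, hv, hw, hvw⟩ := h
      have hv' : c.index v = c.index y := Quotient.exact hv
      have hw' : c.index w = c.index x := Quotient.exact hw
      have hne' : c.index v ≠ c.index w := by
        intro h
        apply hne
        apply Quotient.sound
        show c.index x = c.index y
        rw [← hv', ← hw']
        exact h.symm
      have := (adj_index c hvw hne').symm
      rwa [hv', hw'] at this
  · intro hadj
    have hne : c.index x ≠ c.index y := hadj.ne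
    refine ⟨fun h => hne (Quotient.exact h), ?_⟩
    rw [pathGraph_adj] at hadj
    rcases hadj with h1 | h1
    · -- index y = index x + 1
      left
      set s := c.sizeUpTo (c.index y) with hs
      have hy2 := (c.index y).2
      have hx3 := c.sizeUpTo_index_le x
      have hslt : s < c.sizeUpTo ((c.index y : ℕ) + 1) := c.sizeUpTo_strict_mono hy2
      have hsn : c.sizeUpTo ((c.index y : ℕ) + 1) ≤ n := c.sizeUpTo_le _
      have hxlt : c.sizeUpTo (c.index x) < c.sizeUpTo ((c.index x : ℕ) + 1) :=
        c.sizeUpTo_strict_mono (c.index x).2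
      have heq : c.sizeUpTo ((c.index x : ℕ) + 1) = s := by rw [hs, ← h1]
      have hspos : 1 ≤ s := by omega
      refine ⟨⟨s - 1, by omega⟩, ⟨s, by omega⟩, ?_, ?_, ?_⟩
      · apply Quotient.sound
        show c.index _ = c.index x
        rw [index_eq_iff]
        simp only [Fin.val_mk]
        omega
      · apply Quotient.sound
        show c.index _ = c.index y
        rw [index_eq_iff]
        simp only [Fin.val_mk]
        omega
      · rw [pathGraph_adj]
        simp only [Fin.val_mk]
        omega
    · -- index x = index y + 1
      right
      set s := c.sizeUpTo (c.index x) with hs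
      have hx2 := (c.index x).2
      have hy3 := c.sizeUpTo_index_le y
      have hslt : s < c.sizeUpTo ((c.index x : ℕ) + 1) := c.sizeUpTo_strict_mono hx2
      have hsn : c.sizeUpTo ((c.index x : ℕ) + 1) ≤ n := c.sizeUpTo_le _
      have hylt : c.sizeUpTo (c.index y) < c.sizeUpTo ((c.index y : ℕ) + 1) :=
        c.sizeUpTo_strict_mono (c.index y).2
      have heq : c.sizeUpTo ((c.index y : ℕ) + 1) = s := by rw [hs, ← h1]
      have hspos : 1 ≤ s := by omega
      refine ⟨⟨s - 1, by omega⟩, ⟨s, by omega⟩, ?_, ?_, ?_⟩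
      · apply Quotient.sound
        show c.index _ = c.index y
        rw [index_eq_iff]
        simp only [Fin.val_mk]
        omega
      · apply Quotient.sound
        show c.index _ = c.index x
        rw [index_eq_iff]
        simp only [Fin.val_mk]
        omega
      · rw [pathGraph_adj]
        simp only [Fin.val_mk]
        omega

noncomputable def contractIso (c : Composition n) :
    contractSetoid (pathGraph n) (Setoid.ker c.index) ≃g pathGraph c.length where
  toEquiv := kerEquiv c
  map_rel_iff' := by
    intro a b
    obtain ⟨x, rfl⟩ := a.exists_rep
    obtain ⟨y, rfl⟩ := b.exists_rep
    rw [show (kerEquiv c ⟦x⟧ : Fin c.length) = c.index x from rfl,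
      show (kerEquiv c ⟦y⟧ : Fin c.length) = c.index y from rfl]
    exact (contract_adj c x y).symm

/-! ### The block isomorphisms -/

lemma mk_eq_iff (c : Composition n) (q : Quotient (Setoid.ker c.index)) (w : Fin n) :
    Quotient.mk (Setoid.ker c.index) w = q ↔ c.index w = kerEquiv c q := by
  obtain ⟨j, rfl⟩ := q.exists_rep
  rw [show ((⟦j⟧ : Quotient (Setoid.ker c.index))) = Quotient.mk (Setoid.ker c.index) j from rfl]
  rw [mk_eq_mk_iff, kerEquiv_mk]

noncomputable def blockEquiv (c : Composition n) (i : Fin c.length) :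
    {w : Fin n // c.index w = i} ≃ Fin (c.blocksFun i) where
  toFun w := ⟨((w : Fin n) : ℕ) - c.sizeUpTo i, by
    have hw := (index_eq_iff c w i).mp w.2
    have := c.sizeUpTo_succ' i
    omega⟩
  invFun j := ⟨⟨c.sizeUpTo i + (j : ℕ), by
      have h1 : c.sizeUpTo ((i : ℕ) + 1) ≤ n := c.sizeUpTo_le _
      have := c.sizeUpTo_succ' i
      have := j.2
      omega⟩, by
    rw [index_eq_iff]
    have := c.sizeUpTo_succ' i
    have := j.2
    simp only [Fin.val_mk]
    omega⟩
  left_inv w := by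
    have hw := (index_eq_iff c w i).mp w.2
    apply Subtype.ext
    apply Fin.ext
    simp only [Fin.val_mk]
    omega
  right_inv j := by
    apply Fin.ext
    simp only [Fin.val_mk]
    omega

noncomputable def blockIso (c : Composition n) (q : Quotient (Setoid.ker c.index)) :
    (pathGraph n).induce {w : Fin n | Quotient.mk (Setoid.ker c.index) w = q} ≃g
      pathGraph (c.blocksFun (kerEquiv c q)) where
  toEquiv := (Equiv.subtypeEquivRight (fun w => mk_eq_iff c q w)).trans
    (blockEquiv c (kerEquiv c q))
  map_rel_iff' := by
    intro a b
    set i := kerEquiv c q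
    have ha : c.index (a : Fin n) = i := (mk_eq_iff c q a).mp a.2
    have hb : c.index (b : Fin n) = i := (mk_eq_iff c q b).mp b.2
    have ha' := (index_eq_iff c (a : Fin n) i).mp ha
    have hb' := (index_eq_iff c (b : Fin n) i).mp hb
    show (pathGraph _).Adj (blockEquiv c i ⟨a, ha⟩) (blockEquiv c i ⟨b, hb⟩) ↔
      (pathGraph n).Adj (a : Fin n) (b : Fin n)
    rw [pathGraph_adj, pathGraph_adj]
    simp only [blockEquiv, Equiv.coe_fn_mk]
    omega

end PGF


/-- The path generating function is compositional: `F_P(f * g)(t) = F_P(f)(F_P(g)(t))`,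
i.e. coefficientwise, for every `n ≥ 1`,
`(f * g)(P_n) = Σ_{c composition of n} f(P_{ℓ(c)}) · Π_i g(P_{c_i})`. -/
theorem stmt11 {k : Type} [CommRing k] (f g : GF k)
    (hf : IsoInvariant f) (hg : IsoInvariant g) (n : ℕ) (hn : 1 ≤ n) :
    conv f g (Fin n) inferInstance (SimpleGraph.pathGraph n) =
      ∑ c : Composition n,
        f (Fin c.length) inferInstance (SimpleGraph.pathGraph c.length) *
          ∏ i : Fin c.length,
            g (Fin (c.blocksFun i)) inferInstance (SimpleGraph.pathGraph (c.blocksFun i)) := by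
  classical
  unfold conv
  rw [← Finset.sum_filter]
  refine (Finset.sum_bij
    (i := fun (c : Composition n) (_ : c ∈ Finset.univ) => Setoid.ker c.index)
    ?_ ?_ ?_ ?_).symm
  · intro c _
    simp only [Finset.mem_filter, Finset.mem_univ, true_and]
    exact PGF.gp_ker c
  · intro c1 _ c2 _ h
    exact PGF.ker_index_inj h
  · intro r hr
    rw [Finset.mem_filter] at hr
    obtain ⟨c, hc⟩ := PGF.ker_index_surj r hr.2
    exact ⟨c, Finset.mem_univ c, hc⟩
  · intro c _
    congr 1
    · exact hf _ _ _ _ _ _ ⟨(PGF.contractIso c).symm⟩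
    · refine (Fintype.prod_equiv (PGF.kerEquiv c) _ _ ?_).symm
      intro q
      exact hg _ _ _ _ _ _ ⟨PGF.blockIso c q⟩
end

section
/- For graphic functions f and g with g connected (meaning g of the one-vertex graph equals 1), the stellar generating functions F_St(f)(t) = Σ_{n≥0} f(St_n) t^n/n! satisfy F_St(f * g)(t) = F_St(f)(t) · F_St(g)(t). -/
/-! A tube partition of the star `St_n` has a single nontrivial block, the one containing the
core, so it is determined by the set `U` of leaves outside that block. Contracting the block
gives the star `St_{|U|}`, the block itself induces `St_{n-|U|}`, and every other block is a
single vertex, on which `g` is `1`. Hence `(f * g)(St_n) = Σ_U f(St_{|U|}) g(St_{n-|U|})`, and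
grouping the subsets `U` of the `n` leaves by size gives the binomial convolution. -/

open scoped Classical

/-- The star graph `St_n` on `n+1` vertices: vertex `0` (the core) is adjacent to
all other vertices. -/
def starGraph (n : ℕ) : SimpleGraph (Fin (n + 1)) :=
  SimpleGraph.fromRel fun v _ => v = 0

open Finset

theorem starGraph_eq_starGraph_zero (n : ℕ) : starGraph n = SimpleGraph.starGraph 0 := rfl

section StarGraph

variable {W : Type*} {c : W}

theorem SimpleGraph.induce_starGraph {s : Set W} (hc : c ∈ s) :
    (SimpleGraph.starGraph c).induce s = SimpleGraph.starGraph ⟨c, hc⟩ := by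
  ext a b
  simp [Subtype.ext_iff]

theorem contractSetoid_starGraph (r : Setoid W) :
    contractSetoid (SimpleGraph.starGraph c) r = SimpleGraph.starGraph (Quotient.mk r c) := by
  ext a b
  rw [contractSetoid, SimpleGraph.fromRel_adj, SimpleGraph.starGraph_adj]
  refine and_congr_right fun hab => ⟨?_, ?_⟩
  · rintro (⟨v, w, rfl, rfl, hvw⟩ | ⟨v, w, rfl, rfl, hvw⟩) <;>
      rcases (SimpleGraph.starGraph_adj.1 hvw).2 with rfl | rfl <;> simp
  · have hadj (w : W) (hw : Quotient.mk r c ≠ Quotient.mk r w) :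
        (SimpleGraph.starGraph c).Adj c w :=
      SimpleGraph.starGraph_center_adj fun hcw => hw (hcw ▸ rfl)
    rintro (rfl | rfl)
    · obtain ⟨w, rfl⟩ := Quotient.exists_rep b
      exact Or.inl ⟨c, w, rfl, rfl, hadj w hab⟩
    · obtain ⟨w, rfl⟩ := Quotient.exists_rep a
      exact Or.inr ⟨c, w, rfl, rfl, hadj w hab.symm⟩

def SimpleGraph.Iso.starGraph {W' : Type*} {c' : W'} (e : W ≃ W') (he : e c = c') :
    SimpleGraph.starGraph c ≃g SimpleGraph.starGraph c' where
  __ := e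
  map_rel_iff' := by subst he; simp [e.injective.eq_iff]

theorem nonempty_iso_starGraph [Finite W] (c : W) {m : ℕ} (hm : Nat.card W = m + 1) :
    Nonempty (SimpleGraph.starGraph c ≃g starGraph m) :=
  let e := (Finite.equivFinOfCardEq hm).trans (Equiv.swap (Finite.equivFinOfCardEq hm c) 0)
  ⟨SimpleGraph.Iso.starGraph e (by simp [e])⟩

end StarGraph

theorem IsoInvariant.apply_eq_of_card_eq_one {k : Type*} {g : GF k} (hg : IsoInvariant g)
    {W : Type} (iW : Fintype W) (Δ : SimpleGraph W) (hW : Nat.card W = 1) :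
    g W iW Δ = g (Fin 1) inferInstance ⊥ := by
  have := (Nat.card_eq_one_iff_unique.1 hW).1
  let e := Finite.equivFinOfCardEq hW
  have hΔ : (⊥ : SimpleGraph (Fin 1)).comap e = Δ := Subsingleton.elim _ _
  exact hg _ _ _ _ _ _ ⟨hΔ ▸ .comap e ⊥⟩

def blockSetoid {W : Type*} (T : Set W) : Setoid W where
  r a b := a = b ∨ a ∈ T ∧ b ∈ T
  iseqv :=
    ⟨fun _ => Or.inl rfl, Or.imp Eq.symm And.symm, by
      rintro a b c (rfl | ⟨ha, hb⟩) (rfl | ⟨hb', hc⟩)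
      exacts [Or.inl rfl, Or.inr ⟨hb', hc⟩, Or.inr ⟨ha, hb⟩, Or.inr ⟨ha, hc⟩]⟩

namespace blockSetoid

variable {W : Type*} {T : Set W} {x : W}

theorem mk_eq_mk_iff_mem (hx : x ∈ T) {w : W} :
    Quotient.mk (blockSetoid T) w = Quotient.mk _ x ↔ w ∈ T := by
  rw [Quotient.eq]
  exact ⟨by rintro (rfl | ⟨hw, -⟩); exacts [hx, hw], fun hw => Or.inr ⟨hw, hx⟩⟩

noncomputable def quotientEquiv (hx : x ∈ T) : Quotient (blockSetoid T) ≃ Option ↥Tᶜ where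
  toFun := Quotient.lift (fun v => if h : v ∈ T then none else some ⟨v, h⟩) (by
    rintro a b (rfl | ⟨ha, hb⟩)
    · rfl
    · simp [ha, hb])
  invFun o := o.elim (Quotient.mk _ x) fun v => Quotient.mk _ v
  left_inv q := by
    induction q using Quotient.inductionOn with
    | h v =>
      by_cases hv : v ∈ T
      · simpa [hv] using ((mk_eq_mk_iff_mem hx).2 hv).symm
      · simp [hv]
  right_inv o := by
    rcases o with _ | ⟨v, hv⟩
    · simp [hx]
    · simpa using hv

theorem card_quotient [Finite W] (hx : x ∈ T) :
    Nat.card (Quotient (blockSetoid T)) = Nat.card ↥Tᶜ + 1 := by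
  rw [Nat.card_congr (quotientEquiv hx), Finite.card_option]

theorem card_block (hx : x ∈ T) :
    Nat.card {w // Quotient.mk (blockSetoid T) w = Quotient.mk _ x} = Nat.card T :=
  Nat.card_congr (Equiv.subtypeEquivRight fun _ => mk_eq_mk_iff_mem hx)

theorem card_block_eq_one (hx : x ∈ T) {q : Quotient (blockSetoid T)}
    (hq : q ≠ Quotient.mk _ x) : Nat.card {w // Quotient.mk (blockSetoid T) w = q} = 1 := by
  refine Nat.card_eq_one_iff_exists.2 ⟨⟨q.out, q.out_eq⟩, fun ⟨w, hw⟩ => Subtype.ext ?_⟩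
  rcases Quotient.eq.1 (hw.trans q.out_eq.symm) with h | ⟨hw', -⟩
  · exact h
  · exact absurd (hw ▸ (mk_eq_mk_iff_mem hx).2 hw') hq

end blockSetoid

section StarPartitions

variable {W : Type*} {c : W}

theorem isGraphPartition_starGraph_blockSetoid {T : Set W} (hc : c ∈ T) :
    IsGraphPartition (SimpleGraph.starGraph c) (blockSetoid T) := by
  intro v
  by_cases hv : v ∈ T
  · rw [SimpleGraph.induce_starGraph (show c ∈ {w | blockSetoid T w v} from Or.inr ⟨hc, hv⟩)]
    exact SimpleGraph.connected_starGraph _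
  · have hsingle (w : {w | blockSetoid T w v}) : (w : W) = v := w.2.resolve_right fun h => hv h.2
    have : Subsingleton {w | blockSetoid T w v} :=
      ⟨fun a b => Subtype.ext ((hsingle a).trans (hsingle b).symm)⟩
    have : Nonempty {w | blockSetoid T w v} := ⟨⟨v, Or.inl rfl⟩⟩
    exact .of_subsingleton

theorem IsGraphPartition.eq_blockSetoid_of_starGraph {r : Setoid W}
    (hr : IsGraphPartition (SimpleGraph.starGraph c) r) : r = blockSetoid {v | r v c} := by
  ext a b
  refine ⟨fun hab => ?_, ?_⟩
  · by_cases hne : a = b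
    · exact Or.inl hne
    -- a neighbour of `a` inside the block of `b`; one of the two is the core
    obtain ⟨p⟩ := (hr b).preconnected ⟨a, hab⟩ ⟨b, r.refl b⟩
    have hadj := p.adj_snd (SimpleGraph.Walk.not_nil_of_ne (by simpa [Subtype.ext_iff] using hne))
    rcases (SimpleGraph.starGraph_adj.1 hadj).2 with hac | hsc
    · subst hac
      exact Or.inr ⟨r.refl a, r.symm hab⟩
    · have hcb : r c b := hsc ▸ p.snd.2
      exact Or.inr ⟨r.trans hab (r.symm hcb), r.symm hcb⟩
  · rintro (rfl | ⟨ha, hb⟩)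
    exacts [r.refl a, r.trans ha (r.symm hb)]

theorem sum_isGraphPartition_starGraph [Fintype W] {M : Type*} [AddCommMonoid M] (c : W)
    (φ : Setoid W → M) :
    ∑ r with IsGraphPartition (SimpleGraph.starGraph c) r, φ r =
      ∑ U ∈ (univ.erase c).powerset, φ (blockSetoid (↑U)ᶜ) := by
  symm
  refine sum_nbij' (fun U => blockSetoid (↑U)ᶜ) (fun r => univ.filter fun v => ¬ r v c)
    (fun U hU => ?_) (fun r hr => ?_) (fun U hU => ?_) (fun r hr => ?_) fun _ _ => rfl
  · have hcU : c ∉ U := fun h => by simpa using mem_powerset.1 hU h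
    exact mem_filter.2 ⟨mem_univ _, isGraphPartition_starGraph_blockSetoid hcU⟩
  · exact mem_powerset.2 fun v hv =>
      mem_erase.2 ⟨fun h => (mem_filter.1 hv).2 (h ▸ r.refl c), mem_univ v⟩
  · have hcU : c ∉ U := fun h => by simpa using mem_powerset.1 hU h
    ext v
    simp only [mem_filter, mem_univ, true_and]
    change ¬ (v = c ∨ v ∉ U ∧ c ∉ U) ↔ v ∈ U
    grind
  · conv_rhs => rw [(mem_filter.1 hr).2.eq_blockSetoid_of_starGraph]
    congr 1
    ext v
    simp

end StarPartitions

section Convolution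

variable {k : Type*} [CommRing k] {f g : GF k}

noncomputable def convTerm (f g : GF k) {V : Type} [Finite V] (Γ : SimpleGraph V)
    (r : Setoid V) : k :=
  f (Quotient r) (Fintype.ofFinite _) (contractSetoid Γ r) *
    ∏ q : Quotient r, g {w : V // Quotient.mk r w = q} (Fintype.ofFinite _)
      (Γ.induce {w | Quotient.mk r w = q})

theorem conv_eq_sum_convTerm (f g : GF k) (V : Type) [iV : Fintype V] (Γ : SimpleGraph V) :
    conv f g V iV Γ = ∑ r with IsGraphPartition Γ r, convTerm f g Γ r := by
  rw [sum_filter]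
  rfl

theorem convTerm_starGraph_blockSetoid (hf : IsoInvariant f) (hg : IsoInvariant g)
    (hg1 : g (Fin 1) inferInstance ⊥ = 1) {W : Type} [Finite W] {c : W} {T : Set W}
    (hc : c ∈ T) {m l : ℕ} (hm : Nat.card ↥Tᶜ = m) (hl : Nat.card T = l + 1) :
    convTerm f g (SimpleGraph.starGraph c) (blockSetoid T) =
      f (Fin (m + 1)) inferInstance (starGraph m) *
        g (Fin (l + 1)) inferInstance (starGraph l) := by
  have hcontract : f (Quotient (blockSetoid T)) (Fintype.ofFinite _)
      (contractSetoid (SimpleGraph.starGraph c) (blockSetoid T)) =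
        f (Fin (m + 1)) inferInstance (starGraph m) := by
    rw [contractSetoid_starGraph]
    exact hf _ _ _ _ _ _ (nonempty_iso_starGraph _ (by rw [blockSetoid.card_quotient hc, hm]))
  have hblocks : ∏ q : Quotient (blockSetoid T),
      g {w // Quotient.mk _ w = q} (Fintype.ofFinite _)
        ((SimpleGraph.starGraph c).induce {w | Quotient.mk _ w = q}) =
          g (Fin (l + 1)) inferInstance (starGraph l) := by
    rw [prod_eq_single_of_mem (Quotient.mk _ c) (mem_univ _) fun q _ hq => ?_]
    · refine hg _ _ _ _ _ _ ?_
      rw [SimpleGraph.induce_starGraph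
        (s := {w | Quotient.mk (blockSetoid T) w = Quotient.mk _ c}) rfl]
      exact nonempty_iso_starGraph _ (by rw [blockSetoid.card_block hc, hl])
    · rw [hg.apply_eq_of_card_eq_one _ _ (blockSetoid.card_block_eq_one hc hq), hg1]
  rw [convTerm, hcontract, hblocks]

theorem conv_starGraph (hf : IsoInvariant f) (hg : IsoInvariant g)
    (hg1 : g (Fin 1) inferInstance ⊥ = 1) {W : Type} [Fintype W] (c : W) {n : ℕ}
    (hn : Fintype.card W = n + 1) :
    conv f g W inferInstance (SimpleGraph.starGraph c) =
      ∑ U ∈ (univ.erase c).powerset,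
        f (Fin (#U + 1)) inferInstance (starGraph #U) *
          g (Fin (n - #U + 1)) inferInstance (starGraph (n - #U)) := by
  rw [conv_eq_sum_convTerm, sum_isGraphPartition_starGraph]
  refine sum_congr rfl fun U hU => ?_
  have hUc := mem_powerset.1 hU
  have hcU : c ∉ U := fun h => by simpa using hUc h
  have hUn : #U ≤ n := by simpa [hn] using card_le_card hUc
  refine convTerm_starGraph_blockSetoid hf hg hg1 (c := c) hcU ?_ ?_
  · simp
  · rw [← coe_compl, Nat.card_coe_set_eq, Set.ncard_coe_finset, card_compl, hn]
    omega

end Convolution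

/-- For `g` connected (`g` of the one-vertex graph equals `1`), the stellar
generating functions satisfy `F_St(f * g) = F_St(f) · F_St(g)`, i.e.
coefficientwise `(f * g)(St_n) = Σ_{i=0}^n (n choose i) f(St_i) g(St_{n−i})`. -/
theorem stmt13 {k : Type} [CommRing k] (f g : GF k)
    (hf : IsoInvariant f) (hg : IsoInvariant g)
    (hg1 : g (Fin 1) inferInstance (⊥ : SimpleGraph (Fin 1)) = 1) (n : ℕ) :
    conv f g (Fin (n + 1)) inferInstance (starGraph n) =
      ∑ i ∈ Finset.range (n + 1),
        (n.choose i) • (f (Fin (i + 1)) inferInstance (starGraph i) *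
          g (Fin (n - i + 1)) inferInstance (starGraph (n - i))) := by
  rw [starGraph_eq_starGraph_zero, conv_starGraph hf hg hg1 0 (Fintype.card_fin _),
    sum_powerset_apply_card (fun i => f (Fin (i + 1)) inferInstance (starGraph i) *
      g (Fin (n - i + 1)) inferInstance (starGraph (n - i)))]
  simp
end

section
/- The formal power series F(t) = (√q·t + √(q t² + 1))^{1/√q} ∈ Q[√q][[t]] (defined as exp((1/√q)·arcsinh(√q t)) = exp((1/√q) log(√q t + √(qt²+1)))) satisfies: F is the exponential generating function whose compositional structure is F = exp ∘ M where M(t) = (1/√q)·arcsinh(√q t) is the compositional inverse of S(t) = (1/√q)·sinh(√q t); i.e., S(M(t)) = t in Q[q][[t]], where sinh(√q t) = Σ_{n≥0} q^{n} t^{2n+1} √q/(2n+1)! appropriately interpreted so that S(t) = Σ_{n≥0} q^n t^{2n+1}/(2n+1)!. -/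
/-- Composition of formal power series (valid when the constant coefficient of `g`
vanishes): the coefficient of `tⁿ` in `f(g(t))` is `Σ_{k≤n} f_k · [tⁿ](g^k)`. -/
noncomputable def pscomp {R : Type*} [CommSemiring R] (f g : PowerSeries R) : PowerSeries R :=
  PowerSeries.mk fun n =>
    ∑ k ∈ Finset.range (n + 1), PowerSeries.coeff (R := R) k f * PowerSeries.coeff (R := R) n (g ^ k)

/-- The series `S(t) = Σ_{n≥0} q^n t^{2n+1}/(2n+1)!` (formally `sinh(√q·t)/√q`)
over `ℚ[q]`. -/
noncomputable def S18 : PowerSeries (Polynomial ℚ) :=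
  PowerSeries.mk fun n =>
    if n % 2 = 1 then Polynomial.C ((1 : ℚ) / n.factorial) * Polynomial.X ^ (n / 2) else 0

/-!
The coefficient of `tⁿ` (`n ≥ 1`) in `f(g(t))` is `f₁ gₙ` plus terms `f_k [tⁿ] g^k` with `k ≥ 2`,
and when `g₀ = 0` these only involve `g₀, …, g_{n-1}`. So if `f₀ = 0` and `f₁` is a unit, the
equation `f(g(t)) = t` determines `gₙ` recursively from the lower coefficients, which gives both
existence and uniqueness of the compositional inverse.
-/

open PowerSeries Finset

theorem pow_succ_dvd_pow_sub_pow {R : Type*} [CommRing R] {x a b : R} {n k : ℕ}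
    (ha : x ∣ a) (hb : x ∣ b) (hab : x ^ n ∣ a - b) (hk : 2 ≤ k) :
    x ^ (n + 1) ∣ a ^ k - b ^ k := by
  rw [← (Commute.all a b).mul_geom_sum₂, pow_succ]
  refine mul_dvd_mul hab (dvd_sum fun i _ => ?_)
  rcases Nat.eq_zero_or_pos i with rfl | hi0
  · exact dvd_mul_of_dvd_right (dvd_pow hb (by omega)) _
  · exact dvd_mul_of_dvd_left (dvd_pow ha hi0.ne') _

theorem coeff_pscomp {R : Type*} [CommSemiring R] (f g : R⟦X⟧) (n : ℕ) :
    coeff n (pscomp f g) = ∑ k ∈ range (n + 1), coeff k f * coeff n (g ^ k) :=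
  coeff_mk _ _

theorem coeff_pscomp_of_ne_zero {R : Type*} [CommSemiring R] (f g : R⟦X⟧) {n : ℕ} (hn : n ≠ 0) :
    coeff n (pscomp f g) =
      coeff 1 f * coeff n g + ∑ k ∈ Ico 2 (n + 1), coeff k f * coeff n (g ^ k) := by
  rw [coeff_pscomp, range_eq_Ico, ← sum_Ico_consecutive _ (Nat.zero_le 2) (by omega),
    ← range_eq_Ico, sum_range_succ, sum_range_one]
  simp [coeff_one, hn]

section CompInv

variable {R : Type*} [CommRing R] (f : R⟦X⟧)

noncomputable def pscompInvCoeff : ℕ → R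
  | n => Ring.inverse (coeff 1 f) * ((if n = 1 then 1 else 0) -
      ∑ k ∈ Ico 2 (n + 1),
        coeff k f * coeff n ((mk fun i => if _ : i < n then pscompInvCoeff i else 0) ^ k))

noncomputable def pscompInv : R⟦X⟧ := mk (pscompInvCoeff f)

theorem pscompInvCoeff_zero : pscompInvCoeff f 0 = 0 := by
  rw [pscompInvCoeff]; simp

theorem constantCoeff_pscompInv : constantCoeff (pscompInv f) = 0 := by
  rw [← coeff_zero_eq_constantCoeff_apply, pscompInv, coeff_mk, pscompInvCoeff_zero]

variable {f}

theorem coeff_pscomp_eq_coeff_X_iff (hf : IsUnit (coeff 1 f)) {g : R⟦X⟧}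
    (hg : constantCoeff g = 0) {n : ℕ} (hn : n ≠ 0)
    (hlt : ∀ i < n, coeff i g = pscompInvCoeff f i) :
    coeff n (pscomp f g) = coeff n X ↔ coeff n g = pscompInvCoeff f n := by
  set t : R⟦X⟧ := mk fun i => if _ : i < n then pscompInvCoeff f i else 0
  have hpow : ∀ k ∈ Ico 2 (n + 1), coeff n (g ^ k) = coeff n (t ^ k) := by
    intro k hk
    have hgt : X ^ n ∣ g - t := X_pow_dvd_iff.2 fun i hi => by simp [t, hi, hlt i hi]
    have ht : X ∣ t := X_dvd_iff.2 <| by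
      rw [← coeff_zero_eq_constantCoeff_apply]
      simp [t, pscompInvCoeff_zero]
    have := X_pow_dvd_iff.1 (pow_succ_dvd_pow_sub_pow (X_dvd_iff.2 hg) ht hgt (mem_Ico.1 hk).1)
      n n.lt_succ_self
    rwa [map_sub, sub_eq_zero] at this
  rw [coeff_pscomp_of_ne_zero f g hn, sum_congr rfl fun k hk => by rw [hpow k hk],
    pscompInvCoeff, coeff_X, ← hf.unit_spec, Ring.inverse_unit,
    Units.eq_inv_mul_iff_mul_eq, eq_sub_iff_add_eq]

theorem pscomp_eq_X_iff (hf₀ : coeff 0 f = 0) (hf₁ : IsUnit (coeff 1 f)) {g : R⟦X⟧}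
    (hg : constantCoeff g = 0) : pscomp f g = X ↔ g = pscompInv f := by
  constructor
  · intro hcomp
    ext n
    induction n using Nat.strong_induction_on with
    | _ n ih =>
      rcases eq_or_ne n 0 with rfl | hn
      · simp only [coeff_zero_eq_constantCoeff_apply, hg, constantCoeff_pscompInv]
      · rw [pscompInv, coeff_mk]
        exact (coeff_pscomp_eq_coeff_X_iff hf₁ hg hn fun i hi => by
          rw [ih i hi, pscompInv, coeff_mk]).1 (by rw [hcomp])
  · rintro rfl
    ext n
    rcases eq_or_ne n 0 with rfl | hn
    · simp [coeff_pscomp, hf₀]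
    · exact (coeff_pscomp_eq_coeff_X_iff hf₁ hg hn fun i _ => coeff_mk _ _).2 (coeff_mk _ _)

theorem existsUnique_pscomp_eq_X (hf₀ : coeff 0 f = 0) (hf₁ : IsUnit (coeff 1 f)) :
    ∃! g : R⟦X⟧, constantCoeff g = 0 ∧ pscomp f g = X :=
  ⟨pscompInv f, ⟨constantCoeff_pscompInv f,
      (pscomp_eq_X_iff hf₀ hf₁ (constantCoeff_pscompInv f)).2 rfl⟩,
    fun _ ⟨hg, hcomp⟩ => (pscomp_eq_X_iff hf₀ hf₁ hg).1 hcomp⟩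

end CompInv

/-- The series `S(t) = Σ q^n t^{2n+1}/(2n+1)!` has a (unique) compositional inverse
`M ∈ ℚ[q][[t]]` with zero constant term: `S(M(t)) = t`.  (Then
`F = exp((1/√q)·arcsinh(√q t)) = (√q t + √(qt²+1))^{1/√q}` is `exp ∘ M`.) -/
theorem stmt18 :
    ∃! M : PowerSeries (Polynomial ℚ),
      PowerSeries.constantCoeff (R := Polynomial ℚ) M = 0 ∧ pscomp S18 M = PowerSeries.X :=
  existsUnique_pscomp_eq_X (by simp [S18]) (by simp [S18])
end
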